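/- (Cheeger lower bound) For a finite connected subset Ω of a weighted graph, λ₁(Ω) ≥ 1 - √(1 - h(Ω)²). -/

import Mathlib

open Finset

variable {V : Type*}

noncomputable def deg (μ : V → V → ℝ) (x : V) : ℝ := ∑ᶠ y, μ x y

noncomputable def eSum (μ : V → V → ℝ) (A B : Finset V) : ℝ :=
  ∑ x ∈ A, ∑ y ∈ B, μ x y

noncomputable def vol (μ : V → V → ℝ) (U : Finset V) : ℝ := ∑ x ∈ U, deg μ x

noncomputable def bdry (μ : V → V → ℝ) (U : Finset V) : ℝ := vol μ U - eSum μ U U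

noncomputable def cheeger (μ : V → V → ℝ) (Ω : Finset V) : ℝ :=
  sInf {r : ℝ | ∃ U : Finset V, U.Nonempty ∧ U ⊆ Ω ∧ r = bdry μ U / vol μ U}

noncomputable def dualCheeger (μ : V → V → ℝ) (Ω : Finset V) : ℝ :=
  sSup {r : ℝ | ∃ V₁ V₂ : Finset V, V₁.Nonempty ∧ V₂.Nonempty ∧ Disjoint V₁ V₂ ∧
    V₁ ⊆ Ω ∧ V₂ ⊆ Ω ∧ r = 2 * eSum μ V₁ V₂ / (vol μ V₁ + vol μ V₂)}

noncomputable def dLap (μ : V → V → ℝ) (Ω : Finset V) (f : V → ℝ) (x : V) : ℝ :=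
  f x - (1 / deg μ x) * ∑ y ∈ Ω, μ x y * f y

def IsDirEigfun (μ : V → V → ℝ) (Ω : Finset V) (lam : ℝ) (f : V → ℝ) : Prop :=
  (∃ x ∈ Ω, f x ≠ 0) ∧ (∀ x ∉ Ω, f x = 0) ∧ ∀ x ∈ Ω, dLap μ Ω f x = lam * f x

def IsDirEig (μ : V → V → ℝ) (Ω : Finset V) (lam : ℝ) : Prop :=
  ∃ f : V → ℝ, IsDirEigfun μ Ω lam f

noncomputable def lam1 (μ : V → V → ℝ) (Ω : Finset V) : ℝ :=
  sInf {l : ℝ | IsDirEig μ Ω l}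

noncomputable def lamMax (μ : V → V → ℝ) (Ω : Finset V) : ℝ :=
  sSup {l : ℝ | IsDirEig μ Ω l}

def ConnectedOn (μ : V → V → ℝ) (Ω : Finset V) : Prop :=
  ∀ x ∈ Ω, ∀ y ∈ Ω,
    Relation.ReflTransGen (fun a b => a ∈ Ω ∧ b ∈ Ω ∧ μ a b ≠ 0) x y

def BipartiteOn (μ : V → V → ℝ) (Ω : Finset V) : Prop :=
  ∃ U₁ U₂ : Finset V, Disjoint U₁ U₂ ∧ (U₁ : Set V) ∪ ↑U₂ = ↑Ω ∧
    (∀ x ∈ U₁, ∀ y ∈ U₁, μ x y = 0) ∧ (∀ x ∈ U₂, ∀ y ∈ U₂, μ x y = 0)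

/-!
Let `f` be a Dirichlet eigenfunction of `Ω` with eigenvalue `λ < 1`, normalized to take a positive
value, and let `g = max f 0`. Writing `D = ∑ deg g²` and `E = ∑∑ μ(x,y) g(x) g(y)`, the eigenvalue
equation gives `D - E ≤ λ D`. The co-area formula for the superlevel sets of `g²` gives
`h D ≤ D - ∑∑ μ(x,y) min(g(x)², g(y)²) = ½ ∑∑ μ |g(x)² - g(y)²| + ∑ (edges leaving Ω) g²`, and
Cauchy–Schwarz, using `|a² - b²| = |a - b| (a + b)`, bounds the square of the right side by
`(D - E)(D + E) ≤ λ (2 - λ) D²`. Hence `h² ≤ λ (2 - λ)`, that is `λ ≥ 1 - √(1 - h²)`.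
Dirichlet eigenvalues exist since they are `1 - β` for the eigenvalues `β` of the symmetric matrix
`deg^{-1/2} μ deg^{-1/2}` on `Ω`.
-/

section Weights

variable (μ : V → V → ℝ)

lemma sum_le_deg (hnn : ∀ x y, 0 ≤ μ x y) (hfin : ∀ x, (Function.support (μ x)).Finite)
    (U : Finset V) (x : V) : ∑ y ∈ U, μ x y ≤ deg μ x := by
  classical
  rw [deg, finsum_eq_sum_of_support_subset (μ x) (s := (hfin x).toFinset ∪ U)
    (by rw [coe_union, Set.Finite.coe_toFinset]; exact Set.subset_union_left)]
  exact sum_le_sum_of_subset_of_nonneg subset_union_right fun y _ _ => hnn x y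

lemma bdry_nonneg (hnn : ∀ x y, 0 ≤ μ x y) (hfin : ∀ x, (Function.support (μ x)).Finite)
    (U : Finset V) : 0 ≤ bdry μ U := by
  rw [bdry, vol, eSum, ← sum_sub_distrib]
  exact sum_nonneg fun x _ => sub_nonneg.2 (sum_le_deg μ hnn hfin U x)

lemma bdry_div_vol_nonneg (hnn : ∀ x y, 0 ≤ μ x y)
    (hfin : ∀ x, (Function.support (μ x)).Finite) (hdeg : ∀ x, 0 < deg μ x) (U : Finset V) :
    0 ≤ bdry μ U / vol μ U :=
  div_nonneg (bdry_nonneg μ hnn hfin U) (sum_nonneg fun x _ => (hdeg x).le)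

lemma cheeger_nonneg (hnn : ∀ x y, 0 ≤ μ x y) (hfin : ∀ x, (Function.support (μ x)).Finite)
    (hdeg : ∀ x, 0 < deg μ x) (Ω : Finset V) : 0 ≤ cheeger μ Ω :=
  Real.sInf_nonneg fun _ ⟨U, _, _, hr⟩ => hr ▸ bdry_div_vol_nonneg μ hnn hfin hdeg U

lemma cheeger_mul_vol_le_bdry (hnn : ∀ x y, 0 ≤ μ x y)
    (hfin : ∀ x, (Function.support (μ x)).Finite) (hdeg : ∀ x, 0 < deg μ x)
    {Ω U : Finset V} (hU : U.Nonempty) (hUΩ : U ⊆ Ω) :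
    cheeger μ Ω * vol μ U ≤ bdry μ U := by
  rw [← le_div_iff₀ (show 0 < vol μ U from sum_pos (fun x _ => hdeg x) hU)]
  exact csInf_le ⟨0, fun _ ⟨W, _, _, hr⟩ => hr ▸ bdry_div_vol_nonneg μ hnn hfin hdeg W⟩
    ⟨U, hU, hUΩ, rfl⟩

end Weights

noncomputable def exitDeg (μ : V → V → ℝ) (Ω : Finset V) (x : V) : ℝ :=
  deg μ x - ∑ y ∈ Ω, μ x y

noncomputable def degNormSq (μ : V → V → ℝ) (Ω : Finset V) (g : V → ℝ) : ℝ :=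
  ∑ x ∈ Ω, deg μ x * g x ^ 2

noncomputable def adjForm (μ : V → V → ℝ) (Ω : Finset V) (g : V → ℝ) : ℝ :=
  ∑ x ∈ Ω, ∑ y ∈ Ω, μ x y * (g x * g y)

lemma add_sq_le_add_mul_add {a b c w : ℝ} (hb : 0 ≤ b) (hc : 0 ≤ c) (hw : 0 ≤ w)
    (h : a ^ 2 ≤ b * c) : (a + w) ^ 2 ≤ (b + w) * (c + w) := by
  nlinarith [two_mul_le_add_of_sq_le_mul hb hc h]

section Forms

variable (μ : V → V → ℝ) (Ω : Finset V)

lemma exitDeg_nonneg (hnn : ∀ x y, 0 ≤ μ x y) (hfin : ∀ x, (Function.support (μ x)).Finite)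
    (x : V) : 0 ≤ exitDeg μ Ω x :=
  sub_nonneg.2 (sum_le_deg μ hnn hfin Ω x)

lemma sum_deg_mul_eq (φ : V → ℝ) :
    ∑ x ∈ Ω, deg μ x * φ x = ∑ x ∈ Ω, ∑ y ∈ Ω, μ x y * φ x + ∑ x ∈ Ω, exitDeg μ Ω x * φ x := by
  rw [← sum_add_distrib]
  exact sum_congr rfl fun x _ => by rw [← sum_mul, exitDeg]; ring

variable {μ}

lemma sum_sum_eq_of_add_swap (hsymm : ∀ x y, μ x y = μ y x) {F G : V → V → ℝ}
    (hFG : ∀ x y, F x y + F y x = G x y + G y x) :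
    ∑ x ∈ Ω, ∑ y ∈ Ω, μ x y * F x y = ∑ x ∈ Ω, ∑ y ∈ Ω, μ x y * G x y := by
  have swap : ∀ H : V → V → ℝ,
      ∑ x ∈ Ω, ∑ y ∈ Ω, μ x y * H y x = ∑ x ∈ Ω, ∑ y ∈ Ω, μ x y * H x y := fun H => by
    rw [sum_comm]
    exact sum_congr rfl fun x _ => sum_congr rfl fun y _ => by rw [hsymm]
  have key : ∑ x ∈ Ω, ∑ y ∈ Ω, μ x y * (F x y + F y x)
      = ∑ x ∈ Ω, ∑ y ∈ Ω, μ x y * (G x y + G y x) := by simp only [hFG]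
  simp only [mul_add, sum_add_distrib] at key
  rw [swap F, swap G] at key
  linarith

lemma degNormSq_sub_adjForm (hsymm : ∀ x y, μ x y = μ y x) (g : V → ℝ) :
    degNormSq μ Ω g - adjForm μ Ω g
      = ∑ x ∈ Ω, ∑ y ∈ Ω, μ x y * ((g x - g y) ^ 2 / 2) + ∑ x ∈ Ω, exitDeg μ Ω x * g x ^ 2 := by
  have h := sum_sum_eq_of_add_swap Ω hsymm (F := fun x y => (g x - g y) ^ 2 / 2)
    (G := fun x y => g x ^ 2 - g x * g y) fun x y => by ring
  rw [h, degNormSq, sum_deg_mul_eq, adjForm]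
  simp only [mul_sub, sum_sub_distrib]
  ring

lemma degNormSq_add_adjForm (hsymm : ∀ x y, μ x y = μ y x) (g : V → ℝ) :
    degNormSq μ Ω g + adjForm μ Ω g
      = ∑ x ∈ Ω, ∑ y ∈ Ω, μ x y * ((g x + g y) ^ 2 / 2) + ∑ x ∈ Ω, exitDeg μ Ω x * g x ^ 2 := by
  have h := sum_sum_eq_of_add_swap Ω hsymm (F := fun x y => (g x + g y) ^ 2 / 2)
    (G := fun x y => g x ^ 2 + g x * g y) fun x y => by ring
  rw [h, degNormSq, sum_deg_mul_eq, adjForm]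
  simp only [mul_add, sum_add_distrib]
  ring

lemma sum_deg_mul_sub_sum_min (hsymm : ∀ x y, μ x y = μ y x) (φ : V → ℝ) :
    ∑ x ∈ Ω, deg μ x * φ x - ∑ x ∈ Ω, ∑ y ∈ Ω, μ x y * min (φ x) (φ y)
      = ∑ x ∈ Ω, ∑ y ∈ Ω, μ x y * (|φ x - φ y| / 2) + ∑ x ∈ Ω, exitDeg μ Ω x * φ x := by
  have h := sum_sum_eq_of_add_swap Ω hsymm (F := fun x y => |φ x - φ y| / 2)
    (G := fun x y => φ x - min (φ x) (φ y)) fun x y => by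
      rw [abs_sub_comm (φ y), min_comm (φ y), ← max_sub_min_eq_abs']
      linarith [min_add_max (φ x) (φ y)]
  rw [h, sum_deg_mul_eq]
  simp only [mul_sub, sum_sub_distrib]
  ring

lemma degNormSq_sub_adjForm_nonneg (hsymm : ∀ x y, μ x y = μ y x) (hnn : ∀ x y, 0 ≤ μ x y)
    (hfin : ∀ x, (Function.support (μ x)).Finite) (g : V → ℝ) :
    0 ≤ degNormSq μ Ω g - adjForm μ Ω g := by
  rw [degNormSq_sub_adjForm Ω hsymm]
  exact add_nonneg (sum_nonneg fun x _ => sum_nonneg fun y _ =>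
      mul_nonneg (hnn x y) (by positivity))
    (sum_nonneg fun x _ => mul_nonneg (exitDeg_nonneg μ Ω hnn hfin x) (sq_nonneg _))

lemma sq_sub_sum_min_le (hsymm : ∀ x y, μ x y = μ y x) (hnn : ∀ x y, 0 ≤ μ x y)
    (hfin : ∀ x, (Function.support (μ x)).Finite) (g : V → ℝ) :
    (degNormSq μ Ω g - ∑ x ∈ Ω, ∑ y ∈ Ω, μ x y * min (g x ^ 2) (g y ^ 2)) ^ 2
      ≤ (degNormSq μ Ω g - adjForm μ Ω g) * (degNormSq μ Ω g + adjForm μ Ω g) := by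
  rw [degNormSq_sub_adjForm Ω hsymm, degNormSq_add_adjForm Ω hsymm, degNormSq,
    sum_deg_mul_sub_sum_min Ω hsymm (fun x => g x ^ 2)]
  refine add_sq_le_add_mul_add ?_ ?_
    (sum_nonneg fun x _ => mul_nonneg (exitDeg_nonneg μ Ω hnn hfin x) (sq_nonneg _)) ?_
  · exact sum_nonneg fun x _ => sum_nonneg fun y _ => mul_nonneg (hnn x y) (by positivity)
  · exact sum_nonneg fun x _ => sum_nonneg fun y _ => mul_nonneg (hnn x y) (by positivity)
  simp_rw [← sum_product' Ω Ω]
  refine sum_sq_le_sum_mul_sum_of_sq_le_mul _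
    (fun p _ => mul_nonneg (hnn _ _) (by positivity))
    (fun p _ => mul_nonneg (hnn _ _) (by positivity)) fun p _ => le_of_eq ?_
  rw [mul_pow, div_pow, sq_abs]
  ring

end Forms

section Coarea

open MeasureTheory

variable (μ : V → V → ℝ)

lemma ite_lt_eq_indicator (a c : ℝ) :
    (fun t : ℝ => if t < a then c else 0) = (Set.Iio a).indicator fun _ => c := by
  ext t
  simp [Set.indicator_apply]

lemma integrableOn_ite_lt (a c T : ℝ) :
    IntegrableOn (fun t => if t < a then c else 0) (Set.Ioc 0 T) := by
  rw [ite_lt_eq_indicator]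
  exact (integrableOn_const (by simp)).indicator measurableSet_Iio

lemma integral_ite_lt {a T : ℝ} (c : ℝ) (ha : 0 ≤ a) (haT : a ≤ T) :
    ∫ t in Set.Ioc 0 T, (if t < a then c else 0) = c * a := by
  have hset : Set.Iio a ∩ Set.Ioc 0 T = Set.Ioo 0 a := by
    ext t
    simp only [Set.mem_inter_iff, Set.mem_Iio, Set.mem_Ioc, Set.mem_Ioo]
    constructor
    · rintro ⟨h1, h2, -⟩; exact ⟨h2, h1⟩
    · rintro ⟨h1, h2⟩; exact ⟨h2, h1, by linarith⟩
  rw [ite_lt_eq_indicator, integral_indicator measurableSet_Iio,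
    Measure.restrict_restrict measurableSet_Iio, hset, setIntegral_const,
    Real.volume_real_Ioo_of_le ha, smul_eq_mul, sub_zero, mul_comm]

lemma integrableOn_sum_ite_lt {ι : Type*} (s : Finset ι) (a c : ι → ℝ) (T : ℝ) :
    IntegrableOn (fun t => ∑ i ∈ s, if t < a i then c i else 0) (Set.Ioc 0 T) :=
  integrable_finsetSum s fun i _ => integrableOn_ite_lt (a i) (c i) T

lemma integral_sum_ite_lt {ι : Type*} (s : Finset ι) (a c : ι → ℝ) {T : ℝ}
    (ha : ∀ i ∈ s, 0 ≤ a i) (haT : ∀ i ∈ s, a i ≤ T) :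
    ∫ t in Set.Ioc 0 T, (∑ i ∈ s, if t < a i then c i else 0) = ∑ i ∈ s, c i * a i := by
  rw [integral_finsetSum s fun i _ => integrableOn_ite_lt (a i) (c i) T]
  exact sum_congr rfl fun i hi => integral_ite_lt (c i) (ha i hi) (haT i hi)

lemma cheeger_mul_sum_deg_le (hnn : ∀ x y, 0 ≤ μ x y)
    (hfin : ∀ x, (Function.support (μ x)).Finite) (hdeg : ∀ x, 0 < deg μ x) {Ω : Finset V}
    {φ : V → ℝ} (hφ : ∀ x ∈ Ω, 0 ≤ φ x) :
    cheeger μ Ω * ∑ x ∈ Ω, deg μ x * φ x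
      ≤ ∑ x ∈ Ω, deg μ x * φ x - ∑ x ∈ Ω, ∑ y ∈ Ω, μ x y * min (φ x) (φ y) := by
  classical
  set T := ∑ x ∈ Ω, φ x
  have hφT : ∀ x ∈ Ω, φ x ≤ T := fun x hx => single_le_sum hφ hx
  have hmin : ∀ p ∈ Ω ×ˢ Ω, 0 ≤ min (φ p.1) (φ p.2) := fun p hp =>
    le_min (hφ _ (mem_product.1 hp).1) (hφ _ (mem_product.1 hp).2)
  have hminT : ∀ p ∈ Ω ×ˢ Ω, min (φ p.1) (φ p.2) ≤ T := fun p hp =>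
    (min_le_left _ _).trans (hφT _ (mem_product.1 hp).1)
  let U : ℝ → Finset V := fun t => Ω.filter (t < φ ·)
  have hvol : ∀ t, vol μ (U t) = ∑ x ∈ Ω, if t < φ x then deg μ x else 0 := fun t =>
    sum_filter _ _
  have heSum : ∀ t, eSum μ (U t) (U t)
      = ∑ p ∈ Ω ×ˢ Ω, if t < min (φ p.1) (φ p.2) then μ p.1 p.2 else 0 := fun t => by
    simp only [eSum, U, sum_filter, sum_product, lt_min_iff, ite_and]
    exact sum_congr rfl fun x _ => by split_ifs <;> simp
  have hlevel : ∀ t, cheeger μ Ω * vol μ (U t) ≤ vol μ (U t) - eSum μ (U t) (U t) := fun t => by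
    rcases (U t).eq_empty_or_nonempty with hU | hU
    · simp [hU, vol, eSum]
    · exact cheeger_mul_vol_le_bdry μ hnn hfin hdeg hU (filter_subset _ _)
  -- layer cake: `a = ∫ t in (0, T], 1[t < a]` for `0 ≤ a ≤ T`
  rw [← sum_product' Ω Ω (fun x y => μ x y * min (φ x) (φ y)),
    ← integral_sum_ite_lt Ω φ (deg μ) hφ hφT, ← integral_sum_ite_lt _ _ _ hmin hminT,
    ← integral_const_mul, ← integral_sub (integrableOn_sum_ite_lt _ _ _ T)
      (integrableOn_sum_ite_lt _ _ _ T)]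
  refine setIntegral_mono_on ((integrableOn_sum_ite_lt _ _ _ T).const_mul _)
    ((integrableOn_sum_ite_lt _ _ _ T).sub (integrableOn_sum_ite_lt _ _ _ T)) measurableSet_Ioc
    fun t _ => ?_
  rw [← hvol, ← heSum]
  exact hlevel t

end Coarea

section Eigenfunctions

variable (μ : V → V → ℝ) (Ω : Finset V)

lemma deg_mul_dLap {x : V} (hx : deg μ x ≠ 0) (f : V → ℝ) :
    deg μ x * dLap μ Ω f x = deg μ x * f x - ∑ y ∈ Ω, μ x y * f y := by
  rw [dLap]
  field_simp

lemma dLap_neg (f : V → ℝ) (x : V) : dLap μ Ω (-f) x = -dLap μ Ω f x := by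
  simp only [dLap, Pi.neg_apply, mul_neg, sum_neg_distrib]
  ring

variable {μ Ω}

lemma IsDirEigfun.neg {l : ℝ} {f : V → ℝ} (hf : IsDirEigfun μ Ω l f) :
    IsDirEigfun μ Ω l (-f) := by
  obtain ⟨⟨x₀, hx₀, hfx₀⟩, hzero, heig⟩ := hf
  refine ⟨⟨x₀, hx₀, neg_ne_zero.2 hfx₀⟩, fun x hx => by simp [hzero x hx], fun x hx => ?_⟩
  rw [dLap_neg, heig x hx, Pi.neg_apply, mul_neg]

lemma IsDirEig.exists_pos {l : ℝ} (hl : IsDirEig μ Ω l) :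
    ∃ f, IsDirEigfun μ Ω l f ∧ ∃ x ∈ Ω, 0 < f x := by
  obtain ⟨f, hf⟩ := hl
  obtain ⟨x, hx, hfx⟩ := hf.1
  rcases hfx.lt_or_gt with hneg | hpos
  · exact ⟨-f, hf.neg, x, hx, neg_pos.2 hneg⟩
  · exact ⟨f, hf, x, hx, hpos⟩

lemma degNormSq_sub_adjForm_posPart_le (hnn : ∀ x y, 0 ≤ μ x y) (hdeg : ∀ x, 0 < deg μ x)
    {l : ℝ} {f : V → ℝ} (heig : ∀ x ∈ Ω, dLap μ Ω f x = l * f x) :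
    degNormSq μ Ω (fun x => max (f x) 0) - adjForm μ Ω (fun x => max (f x) 0)
      ≤ l * degNormSq μ Ω (fun x => max (f x) 0) := by
  rw [degNormSq, adjForm, mul_sum, ← sum_sub_distrib]
  refine sum_le_sum fun x hx => ?_
  rcases le_or_gt (f x) 0 with hfx | hfx
  · simp [max_eq_right hfx]
  have hpos : ∑ y ∈ Ω, μ x y * f y ≤ ∑ y ∈ Ω, μ x y * max (f y) 0 :=
    sum_le_sum fun y _ => mul_le_mul_of_nonneg_left (le_max_left _ _) (hnn x y)
  have hx_eq := deg_mul_dLap μ Ω (hdeg x).ne' f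
  rw [heig x hx] at hx_eq
  simp only [max_eq_left hfx.le, mul_left_comm _ (f x), ← mul_sum]
  nlinarith [mul_le_mul_of_nonneg_left hpos hfx.le]

lemma cheeger_sq_le_of_isDirEig (hsymm : ∀ x y, μ x y = μ y x) (hnn : ∀ x y, 0 ≤ μ x y)
    (hfin : ∀ x, (Function.support (μ x)).Finite) (hdeg : ∀ x, 0 < deg μ x) {l : ℝ}
    (hl : IsDirEig μ Ω l) (hl1 : l ≤ 1) : cheeger μ Ω ^ 2 ≤ l * (2 - l) := by
  obtain ⟨f, ⟨-, -, heig⟩, x₀, hx₀, hfx₀⟩ := hl.exists_pos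
  set g : V → ℝ := fun x => max (f x) 0
  set D := degNormSq μ Ω g
  set E := adjForm μ Ω g
  have hD : 0 < D := sum_pos' (fun x _ => mul_nonneg (hdeg x).le (sq_nonneg _))
    ⟨x₀, hx₀, mul_pos (hdeg x₀) (pow_pos (lt_max_of_lt_left hfx₀) 2)⟩
  have hcoarea := cheeger_mul_sum_deg_le μ hnn hfin hdeg (φ := fun x => g x ^ 2) (Ω := Ω)
    fun x _ => sq_nonneg _
  have hCS := sq_sub_sum_min_le Ω hsymm hnn hfin g
  have hX0 : 0 ≤ D - E := degNormSq_sub_adjForm_nonneg Ω hsymm hnn hfin g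
  have hXl : D - E ≤ l * D := degNormSq_sub_adjForm_posPart_le hnn hdeg heig
  have hcheeger := cheeger_nonneg μ hnn hfin hdeg Ω
  have h1 : (cheeger μ Ω * D) ^ 2 ≤ (D - E) * (D + E) :=
    (pow_le_pow_left₀ (mul_nonneg hcheeger hD.le) hcoarea 2).trans hCS
  -- `(D - E) * (D + E) = X * (2 * D - X)` with `X = D - E ≤ l * D ≤ D`
  have h2 : (D - E) * (D + E) ≤ l * (2 - l) * D ^ 2 := by
    have : 0 ≤ (l * D - (D - E)) * (2 * D - l * D - (D - E)) :=
      mul_nonneg (by linarith) (by nlinarith)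
    nlinarith
  exact le_of_mul_le_mul_right (by nlinarith) (pow_pos hD 2)

lemma one_sub_sqrt_le_of_isDirEig (hsymm : ∀ x y, μ x y = μ y x) (hnn : ∀ x y, 0 ≤ μ x y)
    (hfin : ∀ x, (Function.support (μ x)).Finite) (hdeg : ∀ x, 0 < deg μ x) {l : ℝ}
    (hl : IsDirEig μ Ω l) : 1 - Real.sqrt (1 - cheeger μ Ω ^ 2) ≤ l := by
  rcases le_or_gt 1 l with hl1 | hl1
  · linarith [Real.sqrt_nonneg (1 - cheeger μ Ω ^ 2)]
  have hsq := cheeger_sq_le_of_isDirEig hsymm hnn hfin hdeg hl hl1.le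
  have : 1 - l ≤ Real.sqrt (1 - cheeger μ Ω ^ 2) :=
    (le_abs_self _).trans (Real.abs_le_sqrt (by nlinarith))
  linarith

end Eigenfunctions

section Spectral

open Matrix

variable (μ : V → V → ℝ) (Ω : Finset V)

noncomputable def normalizedAdj : Matrix Ω Ω ℝ :=
  Matrix.of fun i j => μ i j / (Real.sqrt (deg μ i) * Real.sqrt (deg μ j))

lemma isHermitian_normalizedAdj (hsymm : ∀ x y, μ x y = μ y x) :
    (normalizedAdj μ Ω).IsHermitian :=
  Matrix.IsHermitian.ext fun i j => by simp [normalizedAdj, hsymm (j : V), mul_comm]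

variable {μ Ω}

lemma isDirEig_of_mulVec_eq (hdeg : ∀ x, 0 < deg μ x) {β : ℝ} {v : Ω → ℝ} (hv : v ≠ 0)
    (hβ : normalizedAdj μ Ω *ᵥ v = β • v) : IsDirEig μ Ω (1 - β) := by
  classical
  have hsqrt : ∀ x, Real.sqrt (deg μ x) ≠ 0 := fun x => (Real.sqrt_pos.2 (hdeg x)).ne'
  let f : V → ℝ := fun x => if h : x ∈ Ω then v ⟨x, h⟩ / Real.sqrt (deg μ x) else 0
  obtain ⟨j, hj⟩ := Function.ne_iff.1 hv
  refine ⟨f, ⟨j, j.2, by simpa [f] using ⟨hj, hsqrt j⟩⟩, fun x hx => by simp [f, hx],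
    fun x hx => ?_⟩
  have hsum : ∑ y ∈ Ω, μ x y * f y = Real.sqrt (deg μ x) * (β * v ⟨x, hx⟩) := by
    have := congrFun hβ ⟨x, hx⟩
    simp only [mulVec, dotProduct, normalizedAdj, of_apply, Pi.smul_apply,
      smul_eq_mul] at this
    rw [← this, mul_sum, ← sum_coe_sort Ω]
    refine sum_congr rfl fun y _ => ?_
    simp only [f, y.2, dite_true]
    field_simp [hsqrt x, hsqrt y]
  simp only [dLap, hsum, f, hx, dite_true]
  field_simp [hsqrt x]
  rw [Real.sq_sqrt (hdeg x).le, mul_div_cancel_left₀ _ (hdeg x).ne']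

lemma exists_isDirEig (hsymm : ∀ x y, μ x y = μ y x) (hdeg : ∀ x, 0 < deg μ x)
    (hΩ : Ω.Nonempty) : ∃ l, IsDirEig μ Ω l := by
  classical
  have hB := isHermitian_normalizedAdj μ Ω hsymm
  have : Nonempty Ω := hΩ.to_subtype
  let i : Ω := Classical.arbitrary _
  exact ⟨_, isDirEig_of_mulVec_eq hdeg
    ((WithLp.ofLp_eq_zero 2).ne.2 (hB.eigenvectorBasis.orthonormal.ne_zero i))
    (hB.mulVec_eigenvectorBasis i)⟩

end Spectral

theorem stmt9_general {V : Type*} (μ : V → V → ℝ) (hsymm : ∀ x y, μ x y = μ y x) (hnn : ∀ x y, 0 ≤ μ x y)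
    (hfin : ∀ x : V, (Function.support (μ x)).Finite) (hdeg : ∀ x : V, 0 < deg μ x)
    (Ω : Finset V) :
    1 - Real.sqrt (1 - (cheeger μ Ω) ^ 2) ≤ lam1 μ Ω := by
  rcases Ω.eq_empty_or_nonempty with rfl | hΩ
  · -- `cheeger μ ∅ = lam1 μ ∅ = sInf ∅ = 0`
    simp [cheeger, lam1, IsDirEig, IsDirEigfun]
  obtain ⟨l, hl⟩ := exists_isDirEig hsymm hdeg hΩ
  exact le_csInf ⟨l, hl⟩ fun l hl => one_sub_sqrt_le_of_isDirEig hsymm hnn hfin hdeg hl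

theorem stmt9 {V : Type*} [Infinite V] (μ : V → V → ℝ) (hsymm : ∀ x y, μ x y = μ y x) (hnn : ∀ x y, 0 ≤ μ x y)
    (hfin : ∀ x : V, (Function.support (μ x)).Finite) (hdeg : ∀ x : V, 0 < deg μ x)
    (hconnG : ∀ x y : V, Relation.ReflTransGen (fun a b => μ a b ≠ 0) x y)
    (Ω : Finset V) (hconn : ConnectedOn μ Ω) (hcard : 2 ≤ Ω.card) :
    1 - Real.sqrt (1 - (cheeger μ Ω) ^ 2) ≤ lam1 μ Ω :=
  stmt9_general μ hsymm hnn hfin hdeg Ω
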